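/- For coprime integers p, q with |p| > 2: q̄ = q̃ if and only if q² ≡ 1 (mod p) or q² ≡ -1 (mod p). -/
import Mathlib


/-- `q̄` is the smallest nonnegative integer congruent to `±q` modulo `p`. -/
def IsQbar (p q qbar : ℤ) : Prop :=
  IsLeast {q' : ℤ | 0 ≤ q' ∧ (q ≡ q' [ZMOD p] ∨ q ≡ -q' [ZMOD p])} qbar

/-- `q̃` is the smallest nonnegative integer `q'` with `q·q' ≡ ±1 (mod p)`. -/
def IsQtilde (p q qt : ℤ) : Prop :=
  IsLeast {q' : ℤ | 0 ≤ q' ∧ (q * q' ≡ 1 [ZMOD p] ∨ q * q' ≡ -1 [ZMOD p])} qt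

private lemma comb_aux {p A B : ℤ} (c d X : ℤ) (hA : p ∣ A) (hB : p ∣ B)
    (hX : X = c * A + d * B) : p ∣ X :=
  hX ▸ (hA.mul_left c).add (hB.mul_left d)

theorem qbar_eq_qtilde_iff (p q qbar qt : ℤ) (h : Int.gcd p q = 1) (hp : 2 < |p|)
    (hqbar : IsQbar p q qbar) (hqt : IsQtilde p q qt) :
    qbar = qt ↔ (q ^ 2 ≡ 1 [ZMOD p] ∨ q ^ 2 ≡ -1 [ZMOD p]) := by
  obtain ⟨⟨hb0, hm⟩, hbmin⟩ := hqbar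
  obtain ⟨⟨ht0, ht⟩, htmin⟩ := hqt
  simp only [Int.modEq_iff_dvd] at hm ht ⊢
  constructor
  · rintro rfl
    rcases hm with hm | hm <;> rcases ht with ht | ht
    · exact Or.inl (comb_aux q 1 _ hm ht (by ring))
    · exact Or.inr (comb_aux q 1 _ hm ht (by ring))
    · exact Or.inr (comb_aux q (-1) _ hm ht (by ring))
    · exact Or.inl (comb_aux q (-1) _ hm ht (by ring))
  · intro hsq
    refine le_antisymm (hbmin ⟨ht0, ?_⟩) (htmin ⟨hb0, ?_⟩) <;>
      simp only [Set.mem_setOf_eq, Int.modEq_iff_dvd]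
    · -- show q ≡ ±qt from q*qt ≡ ±1 and q² ≡ ±1
      rcases ht with hA | hA <;> rcases hsq with hB | hB
      · exact Or.inl (comb_aux (-q) qt _ hA hB (by ring))
      · exact Or.inr (comb_aux (-q) qt _ hA hB (by ring))
      · exact Or.inr (comb_aux q (-qt) _ hA hB (by ring))
      · exact Or.inl (comb_aux q (-qt) _ hA hB (by ring))
    · -- show q*qbar ≡ ±1 from q ≡ ±qbar and q² ≡ ±1
      rcases hm with hA | hA <;> rcases hsq with hB | hB
      · exact Or.inl (comb_aux (-q) 1 _ hA hB (by ring))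
      · exact Or.inr (comb_aux (-q) 1 _ hA hB (by ring))
      · exact Or.inr (comb_aux q (-1) _ hA hB (by ring))
      · exact Or.inl (comb_aux q (-1) _ hA hB (by ring))
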